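/- arXiv:2404.18778 — 2 statements merged into one kernel-verified Lean document; each statement's English description precedes it below -/
import Mathlib

section
/- Let μ be a fully supported probability measure on [q]^V (V finite, q ≥ 3) and let P be the Glauber dynamics for μ. Let h : [q]^V → ℝ be such that for every σ the series ∑_{ℓ=0}^∞ (P^ℓ h(σ) − E_μ[h]) converges absolutely, and define f_h(σ) := −∑_{ℓ=0}^∞ (P^ℓ h(σ) − E_μ[h]). Then for all σ, τ ∈ [q]^V and every sequence (γ_ℓ)_{ℓ≥0} in which γ_ℓ is a coupling of the ℓ-step distributions P^ℓ(σ,·) and P^ℓ(τ,·), one has |f_h(σ) − f_h(τ)| ≤ ‖L(h)‖_∞ · ∑_{ℓ=0}^∞ ∑_{v∈V} γ_ℓ({(ω,ω') : ω(v) ≠ ω'(v)}), where the right-hand side is interpreted in [0,∞]. -/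
noncomputable section
attribute [local instance] Classical.propDecidable

open Finset

variable {V : Type*}

/-- A probability measure on a finite set. -/
def IsProbMeasure {Ω : Type*} [Fintype Ω] (μ : Ω → ℝ) : Prop :=
  (∀ x, 0 ≤ μ x) ∧ ∑ x, μ x = 1

/-- `γ` is a coupling of `μ₁` and `μ₂`. -/
def IsCoupling {Ω : Type*} [Fintype Ω] (γ : Ω × Ω → ℝ) (μ₁ μ₂ : Ω → ℝ) : Prop :=
  (∀ p, 0 ≤ γ p) ∧ (∀ a, ∑ b, γ (a, b) = μ₁ a) ∧ (∀ b, ∑ a, γ (a, b) = μ₂ b)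

/-- The Lipschitz constant of `h` in the coordinate `v`. -/
def Lv [Fintype V] {q : ℕ} (h : (V → Fin q) → ℝ) (v : V) : ℝ :=
  sSup {d : ℝ | ∃ σ τ : V → Fin q, (∀ w, w ≠ v → σ w = τ w) ∧ d = |h σ - h τ|}

/-- `‖L(h)‖_∞`, the maximum coordinatewise Lipschitz constant of `h`. -/
def Lnorm [Fintype V] {q : ℕ} (h : (V → Fin q) → ℝ) : ℝ :=
  sSup {d : ℝ | ∃ v : V, d = Lv h v}

/-- The conditional spin distribution `μ_v(k | σ)`. -/
def condSpin [Fintype V] {q : ℕ} (μ : (V → Fin q) → ℝ) (v : V)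
    (σ : V → Fin q) (k : Fin q) : ℝ :=
  μ (Function.update σ v k) / ∑ k' : Fin q, μ (Function.update σ v k')

/-- The Glauber dynamics transition matrix for the measure `μ` on `[q]^V`. -/
def glauber [Fintype V] {q : ℕ} (μ : (V → Fin q) → ℝ) (σ τ : V → Fin q) : ℝ :=
  (Fintype.card V : ℝ)⁻¹ *
    ∑ v : V, if ∀ w, w ≠ v → τ w = σ w then condSpin μ v σ (τ v) else 0

/-- `t`-step transition matrix. -/
def kpow {Ω : Type*} [Fintype Ω] (K : Ω → Ω → ℝ) : ℕ → Ω → Ω → ℝ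
  | 0 => fun σ τ => if σ = τ then 1 else 0
  | n + 1 => fun σ τ => ∑ ρ, kpow K n σ ρ * K ρ τ

/-- The solution `f_h(σ) = -∑_{ℓ≥0} (P^ℓ h(σ) - E_μ[h])` of the Stein equation. -/
def fh [Fintype V] {q : ℕ} (μ : (V → Fin q) → ℝ) (h : (V → Fin q) → ℝ)
    (σ : V → Fin q) : ℝ :=
  -∑' ℓ : ℕ, ((∑ τ, kpow (glauber μ) ℓ σ τ * h τ) - ∑ τ, μ τ * h τ)

lemma abs_le_Lv [Fintype V] {q : ℕ} (h : (V → Fin q) → ℝ) (v : V)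
    (σ' τ' : V → Fin q) (hag : ∀ w, w ≠ v → σ' w = τ' w) :
    |h σ' - h τ'| ≤ Lv h v := by
  have hbdd : BddAbove {d : ℝ | ∃ σ τ : V → Fin q, (∀ w, w ≠ v → σ w = τ w) ∧ d = |h σ - h τ|} := by
    apply Set.Finite.bddAbove
    apply Set.Finite.subset (Set.finite_range (fun p : (V → Fin q) × (V → Fin q) => |h p.1 - h p.2|))
    rintro d ⟨a, b, -, rfl⟩
    exact ⟨(a, b), rfl⟩
  exact le_csSup hbdd ⟨σ', τ', hag, rfl⟩

lemma Lv_le_Lnorm [Fintype V] {q : ℕ} (h : (V → Fin q) → ℝ) (v : V) :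
    Lv h v ≤ Lnorm h := by
  have hbdd : BddAbove {d : ℝ | ∃ v : V, d = Lv h v} := by
    apply Set.Finite.bddAbove
    apply Set.Finite.subset (Set.finite_range (Lv h))
    rintro d ⟨w, rfl⟩; exact ⟨w, rfl⟩
  exact le_csSup hbdd ⟨v, rfl⟩

lemma Lnorm_nonneg [Fintype V] {q : ℕ} (h : (V → Fin q) → ℝ) : 0 ≤ Lnorm h := by
  by_cases hV : Nonempty V
  · obtain ⟨v⟩ := hV
    refine le_trans ?_ (Lv_le_Lnorm h v)
    by_cases hq : Nonempty (Fin q)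
    · obtain ⟨k⟩ := hq
      have := abs_le_Lv h v (fun _ => k) (fun _ => k) (fun _ _ => rfl)
      simpa using this
    · have : {d : ℝ | ∃ σ τ : V → Fin q, (∀ w, w ≠ v → σ w = τ w) ∧ d = |h σ - h τ|} = ∅ := by
        ext d; simp only [Set.mem_setOf_eq, Set.mem_empty_iff_false, iff_false]
        rintro ⟨a, -, -⟩
        exact hq ⟨a v⟩
      rw [Lv, this, Real.sSup_empty]
  · have : {d : ℝ | ∃ v : V, d = Lv h v} = ∅ := by
      ext d; simp only [Set.mem_setOf_eq, Set.mem_empty_iff_false, iff_false]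
      rintro ⟨v, -⟩; exact hV ⟨v⟩
    rw [Lnorm, this, Real.sSup_empty]

lemma hybrid [Fintype V] {q : ℕ} (h : (V → Fin q) → ℝ) (S : Finset V) :
    ∀ ω ω' : V → Fin q, (∀ v ∉ S, ω v = ω' v) →
      |h ω - h ω'| ≤ Lnorm h * S.card := by
  classical
  induction S using Finset.induction_on with
  | empty =>
    intro ω ω' hag
    have : ω = ω' := funext fun v => hag v (by simp)
    simp [this]
  | @insert a S ha ih =>
    intro ω ω' hag
    set ω'' := Function.update ω a (ω' a) with hω''
    have h1 : |h ω - h ω''| ≤ Lnorm h := by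
      refine le_trans (abs_le_Lv h a ω ω'' ?_) (Lv_le_Lnorm h a)
      intro w hw
      rw [hω'', Function.update_of_ne hw]
    have h2 : |h ω'' - h ω'| ≤ Lnorm h * S.card := by
      apply ih
      intro v hv
      by_cases hva : v = a
      · subst hva; rw [hω'', Function.update_self]
      · rw [hω'', Function.update_of_ne hva]
        exact hag v (by simp [hva, hv])
    calc |h ω - h ω'| ≤ |h ω - h ω''| + |h ω'' - h ω'| := abs_sub_le _ _ _
      _ ≤ Lnorm h + Lnorm h * S.card := add_le_add h1 h2
      _ = Lnorm h * (S.card + 1) := by ring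
      _ = Lnorm h * (insert a S).card := by
          rw [Finset.card_insert_of_notMem ha]; push_cast; ring

theorem stmt5 [Fintype V] (q : ℕ) (hq : 3 ≤ q)
    (μ : (V → Fin q) → ℝ) (hμ : IsProbMeasure μ) (hsupp : ∀ σ, 0 < μ σ)
    (h : (V → Fin q) → ℝ)
    (hconv : ∀ σ : V → Fin q, Summable fun ℓ : ℕ =>
      |(∑ τ, kpow (glauber μ) ℓ σ τ * h τ) - ∑ τ, μ τ * h τ|)
    (σ τ : V → Fin q)
    (γ : ℕ → ((V → Fin q) × (V → Fin q)) → ℝ)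
    (hγ : ∀ ℓ : ℕ, IsCoupling (γ ℓ) (kpow (glauber μ) ℓ σ) (kpow (glauber μ) ℓ τ)) :
    ENNReal.ofReal |fh μ h σ - fh μ h τ| ≤
      ENNReal.ofReal (Lnorm h) *
        ∑' ℓ : ℕ, ∑ v : V, ENNReal.ofReal
          (∑ p : (V → Fin q) × (V → Fin q), if p.1 v ≠ p.2 v then γ ℓ p else 0) := by
  classical
  set A : ℕ → ℝ := fun ℓ => (∑ τ', kpow (glauber μ) ℓ σ τ' * h τ') - ∑ τ', μ τ' * h τ' with hA
  set B : ℕ → ℝ := fun ℓ => (∑ τ', kpow (glauber μ) ℓ τ τ' * h τ') - ∑ τ', μ τ' * h τ' with hB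
  set c : ℕ → ℝ := fun ℓ => ∑ v : V, ∑ p : (V → Fin q) × (V → Fin q),
      if p.1 v ≠ p.2 v then γ ℓ p else 0 with hc
  have hs_v_nonneg : ∀ ℓ (v : V),
      0 ≤ ∑ p : (V → Fin q) × (V → Fin q), if p.1 v ≠ p.2 v then γ ℓ p else 0 := by
    intro ℓ v
    apply Finset.sum_nonneg
    intro p _
    split
    · exact (hγ ℓ).1 p
    · exact le_refl 0
  -- key pointwise bound
  have key : ∀ ℓ, |B ℓ - A ℓ| ≤ Lnorm h * c ℓ := by
    intro ℓ
    obtain ⟨hγnn, hγ1, hγ2⟩ := hγ ℓ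
    have m1 : ∑ p : (V → Fin q) × (V → Fin q), γ ℓ p * h p.1
        = ∑ a, kpow (glauber μ) ℓ σ a * h a := by
      rw [Fintype.sum_prod_type]
      refine Finset.sum_congr rfl fun a _ => ?_
      rw [← hγ1 a, Finset.sum_mul]
    have m2 : ∑ p : (V → Fin q) × (V → Fin q), γ ℓ p * h p.2
        = ∑ b, kpow (glauber μ) ℓ τ b * h b := by
      rw [Fintype.sum_prod_type_right]
      refine Finset.sum_congr rfl fun b _ => ?_
      rw [← hγ2 b, Finset.sum_mul]
    have hdiff : B ℓ - A ℓ
        = ∑ p : (V → Fin q) × (V → Fin q), γ ℓ p * (h p.2 - h p.1) := by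
      simp only [hA, hB]
      rw [show ∀ x y z : ℝ, (x - z) - (y - z) = x - y from fun x y z => by ring]
      rw [← m1, ← m2, ← Finset.sum_sub_distrib]
      exact Finset.sum_congr rfl fun p _ => by ring
    rw [hdiff]
    calc |∑ p : (V → Fin q) × (V → Fin q), γ ℓ p * (h p.2 - h p.1)|
        ≤ ∑ p : (V → Fin q) × (V → Fin q), |γ ℓ p * (h p.2 - h p.1)| :=
          Finset.abs_sum_le_sum_abs _ _
      _ ≤ ∑ p : (V → Fin q) × (V → Fin q),
            γ ℓ p * (Lnorm h * ((Finset.univ.filter (fun v => p.1 v ≠ p.2 v)).card : ℝ)) := by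
          refine Finset.sum_le_sum fun p _ => ?_
          rw [abs_mul, abs_of_nonneg (hγnn p)]
          refine mul_le_mul_of_nonneg_left ?_ (hγnn p)
          refine le_trans (hybrid h (Finset.univ.filter (fun v => p.1 v ≠ p.2 v)) p.2 p.1 ?_) ?_
          · intro v hv
            by_contra hne
            exact hv (by simp [Ne.symm hne])
          · exact le_refl _
      _ = Lnorm h * c ℓ := by
          rw [hc, Finset.mul_sum]
          simp only [Finset.mul_sum]
          rw [Finset.sum_comm]
          refine Finset.sum_congr rfl fun p _ => ?_
          have hite : ∀ v : V, Lnorm h * (if p.1 v ≠ p.2 v then γ ℓ p else 0)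
              = if p.1 v ≠ p.2 v then Lnorm h * γ ℓ p else 0 := by
            intro v; split <;> simp
          simp_rw [hite]
          rw [← Finset.sum_filter, Finset.sum_const, nsmul_eq_mul]
          ring
  -- summability
  have hsA : Summable A := summable_abs_iff.mp (hconv σ)
  have hsB : Summable B := summable_abs_iff.mp (hconv τ)
  have hsD : Summable fun ℓ => |B ℓ - A ℓ| := by
    refine Summable.of_nonneg_of_le (fun _ => abs_nonneg _) (fun ℓ => ?_)
      ((hconv τ).add (hconv σ))
    calc |B ℓ - A ℓ| ≤ |B ℓ| + |A ℓ| := abs_sub _ _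
      _ = |B ℓ| + |A ℓ| := rfl
  have hfσ : fh μ h σ = -∑' ℓ, A ℓ := rfl
  have hfτ : fh μ h τ = -∑' ℓ, B ℓ := rfl
  have hfd : fh μ h σ - fh μ h τ = ∑' ℓ, (B ℓ - A ℓ) := by
    rw [hfσ, hfτ, Summable.tsum_sub hsB hsA]; ring
  calc ENNReal.ofReal |fh μ h σ - fh μ h τ|
      = ENNReal.ofReal |∑' ℓ, (B ℓ - A ℓ)| := by rw [hfd]
    _ ≤ ENNReal.ofReal (∑' ℓ, |B ℓ - A ℓ|) := by
        apply ENNReal.ofReal_le_ofReal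
        simpa [Real.norm_eq_abs] using
          norm_tsum_le_tsum_norm (f := fun ℓ => B ℓ - A ℓ)
            (by simpa [Real.norm_eq_abs] using hsD)
    _ = ∑' ℓ, ENNReal.ofReal |B ℓ - A ℓ| :=
        ENNReal.ofReal_tsum_of_nonneg (fun _ => abs_nonneg _) hsD
    _ ≤ ∑' ℓ : ℕ, ENNReal.ofReal (Lnorm h) * ∑ v : V, ENNReal.ofReal
          (∑ p : (V → Fin q) × (V → Fin q), if p.1 v ≠ p.2 v then γ ℓ p else 0) := by
        refine ENNReal.tsum_le_tsum fun ℓ => ?_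
        calc ENNReal.ofReal |B ℓ - A ℓ| ≤ ENNReal.ofReal (Lnorm h * c ℓ) :=
              ENNReal.ofReal_le_ofReal (key ℓ)
          _ = ENNReal.ofReal (Lnorm h) * ENNReal.ofReal (c ℓ) :=
              ENNReal.ofReal_mul (Lnorm_nonneg h)
          _ = ENNReal.ofReal (Lnorm h) * ∑ v : V, ENNReal.ofReal
                (∑ p : (V → Fin q) × (V → Fin q), if p.1 v ≠ p.2 v then γ ℓ p else 0) := by
              rw [hc, ENNReal.ofReal_sum_of_nonneg (fun v _ => hs_v_nonneg ℓ v)]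
    _ = ENNReal.ofReal (Lnorm h) *
        ∑' ℓ : ℕ, ∑ v : V, ENNReal.ofReal
          (∑ p : (V → Fin q) × (V → Fin q), if p.1 v ≠ p.2 v then γ ℓ p else 0) :=
        ENNReal.tsum_mul_left
end
end

section
/- Let G = (V,E) be a finite simple graph on N vertices with maximum degree Δ, let q ≥ 3, and let P be the Glauber dynamics for the Potts model on G with inverse temperature β ≥ 0. If Δ·tanh(β/N) < 1, then for all σ, τ ∈ [q]^V there exists a coupling (X₁^σ, X₁^τ) of the one-step distributions P(σ,·) and P(τ,·) such that E[d_H(X₁^σ, X₁^τ)] ≤ (1 − (1 − Δ·tanh(β/N))/N)·d_H(σ,τ); that is, P is contracting with respect to the Hamming distance with rate κ = 1 − (1 − Δ·tanh(β/N))/N. -/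
/-!
Path coupling. Let `σ` and `τ` differ only at `u`. Both chains pick the same site `v` and resample
it under a maximal coupling of the two conditional spin distributions. The conditional law at `v`
depends only on the colours of the neighbours of `v`, through the local fields
`2 (β / N) · #{w ∼ v : σ w = k}`. So at `v = u` and at non-neighbours of `u` the two laws agree,
while at a neighbour of `u` the fields differ by at most `2 β / N`, which puts the two Gibbs laws
on `[q]` within total variation `tanh (β / N)`. The expected distance after one step is therefore
at most `(N - 1 + deg u · tanh (β / N)) / N`, and gluing such couplings along a path of
single-site changes from `σ` to `τ` multiplies the bound by `d_H(σ, τ)`.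
-/

noncomputable section
attribute [local instance] Classical.propDecidable

open Finset

variable {V : Type*}

/-- The Hamming distance between two configurations (as a real number). -/
def hamming [Fintype V] {q : ℕ} (σ τ : V → Fin q) : ℝ :=
  ((Finset.univ.filter fun v => σ v ≠ τ v).card : ℝ)

/-- The Potts Hamiltonian: `H(σ) = -(1/N) ∑_{(u,v) ordered, {u,v} ∈ E} 1{σ(u)=σ(v)}`. -/
def pottsH [Fintype V] {q : ℕ} (G : SimpleGraph V) (σ : V → Fin q) : ℝ :=
  -(Fintype.card V : ℝ)⁻¹ *
    ∑ u : V, ∑ v : V, if G.Adj u v ∧ σ u = σ v then 1 else 0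

/-- The Potts Gibbs measure at inverse temperature `β`. -/
def pottsGibbs [Fintype V] (q : ℕ) (G : SimpleGraph V) (β : ℝ) (σ : V → Fin q) : ℝ :=
  Real.exp (-β * pottsH G σ) / ∑ τ : V → Fin q, Real.exp (-β * pottsH G τ)

namespace IsCoupling

variable {Ω : Type*} [Fintype Ω] {γ γ₁ γ₂ : Ω × Ω → ℝ} {μ₁ μ₂ μ₃ : Ω → ℝ}

lemma right_nonneg (h : IsCoupling γ μ₁ μ₂) (b : Ω) : 0 ≤ μ₂ b :=
  h.2.2 b ▸ Finset.sum_nonneg fun a _ => h.1 (a, b)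

lemma apply_le_left (h : IsCoupling γ μ₁ μ₂) (a b : Ω) : γ (a, b) ≤ μ₁ a :=
  h.2.1 a ▸ Finset.single_le_sum (fun b' _ => h.1 (a, b')) (mem_univ b)

lemma apply_le_right (h : IsCoupling γ μ₁ μ₂) (a b : Ω) : γ (a, b) ≤ μ₂ b :=
  h.2.2 b ▸ Finset.single_le_sum (fun a' _ => h.1 (a', b)) (mem_univ a)

lemma exists_self_cost_eq_zero {μ : Ω → ℝ} (hμ : ∀ a, 0 ≤ μ a) (d : Ω → Ω → ℝ)
    (hd : ∀ a, d a a = 0) : ∃ γ, IsCoupling γ μ μ ∧ ∑ p, γ p * d p.1 p.2 = 0 := by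
  refine ⟨fun p => if p.1 = p.2 then μ p.1 else 0,
    ⟨fun p => ?_, fun a => by simp, fun b => by simp⟩, Finset.sum_eq_zero fun p _ => ?_⟩
  · dsimp only
    split_ifs
    exacts [hμ _, le_rfl]
  · dsimp only
    split_ifs with hp
    · rw [hp, hd, mul_zero]
    · rw [zero_mul]

/-- Where `μ₂ b = 0`, also `γ₁ (a, b) = 0`, so the junk value `x / 0 = 0` is harmless. -/
lemma exists_glue (h₁ : IsCoupling γ₁ μ₁ μ₂) (h₂ : IsCoupling γ₂ μ₂ μ₃) :
    ∃ T : Ω → Ω → Ω → ℝ, (∀ a b c, 0 ≤ T a b c) ∧ (∀ a b, ∑ c, T a b c = γ₁ (a, b)) ∧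
      ∀ b c, ∑ a, T a b c = γ₂ (b, c) := by
  refine ⟨fun a b c => γ₁ (a, b) * γ₂ (b, c) / μ₂ b, fun a b c =>
    div_nonneg (mul_nonneg (h₁.1 _) (h₂.1 _)) (h₁.right_nonneg b), fun a b => ?_, fun b c => ?_⟩
  · rw [← Finset.sum_div, ← Finset.mul_sum, h₂.2.1 b]
    rcases eq_or_ne (μ₂ b) 0 with hb | hb
    · simp [hb, le_antisymm (hb ▸ h₁.apply_le_right a b) (h₁.1 (a, b))]
    · exact mul_div_cancel_right₀ _ hb
  · rw [← Finset.sum_div, ← Finset.sum_mul, h₁.2.2 b]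
    rcases eq_or_ne (μ₂ b) 0 with hb | hb
    · simp [hb, le_antisymm (hb ▸ h₂.apply_le_left b c) (h₂.1 (b, c))]
    · exact mul_div_cancel_left₀ _ hb

lemma exists_cost_le_add (h₁ : IsCoupling γ₁ μ₁ μ₂) (h₂ : IsCoupling γ₂ μ₂ μ₃)
    (d : Ω → Ω → ℝ) (hd : ∀ a b c, d a c ≤ d a b + d b c) :
    ∃ γ, IsCoupling γ μ₁ μ₃ ∧
      ∑ p, γ p * d p.1 p.2 ≤ ∑ p, γ₁ p * d p.1 p.2 + ∑ p, γ₂ p * d p.1 p.2 := by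
  obtain ⟨T, hT, hTc, hTa⟩ := exists_glue h₁ h₂
  refine ⟨fun p => ∑ b, T p.1 b p.2, ⟨fun p => sum_nonneg fun b _ => hT _ _ _, fun a => ?_,
    fun c => ?_⟩, ?_⟩
  · rw [Finset.sum_comm]
    simp only [hTc, h₁.2.1]
  · rw [Finset.sum_comm]
    simp only [hTa, h₂.2.2]
  calc ∑ p : Ω × Ω, (∑ b, T p.1 b p.2) * d p.1 p.2
      = ∑ a, ∑ c, ∑ b, T a b c * d a c := by
        simp only [Fintype.sum_prod_type, Finset.sum_mul]
    _ ≤ ∑ a, ∑ c, ∑ b, (T a b c * d a b + T a b c * d b c) := by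
        gcongr with a _ c _ b _
        rw [← mul_add]
        exact mul_le_mul_of_nonneg_left (hd a b c) (hT a b c)
    _ = ∑ a, ∑ b, (∑ c, T a b c) * d a b + ∑ b, ∑ c, (∑ a, T a b c) * d b c := by
        simp only [Finset.sum_add_distrib, Finset.sum_mul]
        congr 1
        · exact Finset.sum_congr rfl fun a _ => Finset.sum_comm
        · exact Finset.sum_comm.trans
            ((Finset.sum_congr rfl fun c _ => Finset.sum_comm).trans Finset.sum_comm)
    _ = ∑ p, γ₁ p * d p.1 p.2 + ∑ p, γ₂ p * d p.1 p.2 := by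
        simp only [hTc, hTa, Fintype.sum_prod_type]

end IsCoupling

section TotalVariation

variable {α : Type*} [Fintype α]

/-- The maximal coupling: the common mass `min (p k) (p' k)` sits on the diagonal, the rest is
spread as a product measure. -/
lemma exists_isCoupling_offDiag_le [DecidableEq α] {p p' : α → ℝ} (hp : ∀ k, 0 ≤ p k)
    (hp' : ∀ k, 0 ≤ p' k) (h1 : ∑ k, p k = 1) (h1' : ∑ k, p' k = 1) :
    ∃ γ, IsCoupling γ p p' ∧
      ∑ x, γ x * (if x.1 = x.2 then 0 else 1) ≤ 1 - ∑ k, min (p k) (p' k) := by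
  set m : α → ℝ := fun k => min (p k) (p' k)
  set D : ℝ := 1 - ∑ k, m k
  have hr : ∀ k, 0 ≤ p k - m k := fun k => sub_nonneg.2 (min_le_left _ _)
  have hr' : ∀ k, 0 ≤ p' k - m k := fun k => sub_nonneg.2 (min_le_right _ _)
  have hD : ∑ k, (p k - m k) = D := by rw [Finset.sum_sub_distrib, h1]
  have hD' : ∑ k, (p' k - m k) = D := by rw [Finset.sum_sub_distrib, h1']
  -- `D = 0` forces `f = 0`, so the junk value `x / 0 = 0` gives the right marginals.
  have cancel : ∀ {f : α → ℝ}, (∀ k, 0 ≤ f k) → ∑ k, f k = D → ∀ j, f j * D / D = f j := by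
    intro f hf hfD j
    rcases eq_or_ne D 0 with h0 | h0
    · rw [← hfD] at h0
      simp [(Finset.sum_eq_zero_iff_of_nonneg fun k _ => hf k).1 h0 j (mem_univ j)]
    · exact mul_div_cancel_right₀ _ h0
  have hDnn : 0 ≤ D := hD ▸ Finset.sum_nonneg fun k _ => hr k
  have hrow : ∀ j, ∑ k, (p j - m j) * (p' k - m k) / D = p j - m j := fun j => by
    rw [← Finset.sum_div, ← Finset.mul_sum, hD', cancel hr hD]
  have hcol : ∀ k, ∑ j, (p j - m j) * (p' k - m k) / D = p' k - m k := fun k => by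
    rw [← Finset.sum_div, ← Finset.sum_mul, hD, mul_comm, cancel hr' hD']
  refine ⟨fun x => (if x.1 = x.2 then m x.1 else 0) + (p x.1 - m x.1) * (p' x.2 - m x.2) / D,
    ⟨fun x => ?_, fun j => ?_, fun k => ?_⟩, ?_⟩
  · have : 0 ≤ (p x.1 - m x.1) * (p' x.2 - m x.2) / D :=
      div_nonneg (mul_nonneg (hr _) (hr' _)) hDnn
    dsimp only
    split_ifs
    · exact add_nonneg (le_min (hp _) (hp' _)) this
    · simpa using this
  · simp only [Finset.sum_add_distrib, Finset.sum_ite_eq, mem_univ, if_true, hrow]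
    ring
  · simp only [Finset.sum_add_distrib, Finset.sum_ite_eq', mem_univ, if_true, hcol]
    ring
  calc ∑ x : α × α, ((if x.1 = x.2 then m x.1 else 0) + (p x.1 - m x.1) * (p' x.2 - m x.2) / D) *
        (if x.1 = x.2 then 0 else 1)
      ≤ ∑ x : α × α, (p x.1 - m x.1) * (p' x.2 - m x.2) / D := by
        gcongr with x
        split_ifs with h
        · simpa using div_nonneg (mul_nonneg (hr _) (hr' _)) hDnn
        · simp
    _ = D := by simp only [Fintype.sum_prod_type, hrow, hD]

/-- On `{p < p'}` the excess `p' - p` is at most `(t² L - 1) p`, off it `p - p'` is at most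
`(1 - L) p`; the two bounds on the total variation balance at `(t - 1) / (t + 1)`. -/
lemma one_sub_sum_min_le_of_ratio {p p' : α → ℝ} (h1 : ∑ k, p k = 1) (h1' : ∑ k, p' k = 1)
    {L t : ℝ} (ht : 1 ≤ t) (hL : ∀ k, L * p k ≤ p' k) (hU : ∀ k, p' k ≤ t ^ 2 * L * p k) :
    1 - ∑ k, min (p k) (p' k) ≤ (t - 1) / (t + 1) := by
  set D := 1 - ∑ k, min (p k) (p' k)
  set x := ∑ k, if p k < p' k then p k else 0
  have hL1 : L ≤ 1 := by
    simpa [← Finset.mul_sum, h1, h1'] using Finset.sum_le_sum fun k (_ : k ∈ univ) => hL k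
  have hU1 : 1 ≤ t ^ 2 * L := by
    simpa [← Finset.mul_sum, h1, h1'] using Finset.sum_le_sum fun k (_ : k ∈ univ) => hU k
  have hup : D ≤ (t ^ 2 * L - 1) * x := by
    calc D = ∑ k, (p' k - min (p k) (p' k)) := by rw [Finset.sum_sub_distrib, h1']
      _ ≤ ∑ k, (t ^ 2 * L - 1) * (if p k < p' k then p k else 0) := by
        gcongr with k
        split_ifs with h
        · linarith [min_eq_left h.le, hU k]
        · simp [min_eq_right (not_lt.1 h)]
      _ = (t ^ 2 * L - 1) * x := by rw [Finset.mul_sum]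
  have hdown : D ≤ (1 - L) * (1 - x) := by
    calc D = ∑ k, (p k - min (p k) (p' k)) := by rw [Finset.sum_sub_distrib, h1]
      _ ≤ ∑ k, (1 - L) * (p k - if p k < p' k then p k else 0) := by
        gcongr with k
        split_ifs with h
        · simp [min_eq_left h.le]
        · linarith [min_eq_right (not_lt.1 h), hL k]
      _ = (1 - L) * (1 - x) := by rw [← Finset.mul_sum, Finset.sum_sub_distrib, h1]
  have key : D * ((t ^ 2 - 1) * L) ≤ (t - 1) ^ 2 * L := by
    nlinarith [mul_le_mul_of_nonneg_right hup (sub_nonneg.2 hL1),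
      mul_le_mul_of_nonneg_right hdown (sub_nonneg.2 hU1), sq_nonneg (t * L - 1)]
  rcases ht.lt_or_eq with ht | rfl
  · have hLpos : 0 < L := by nlinarith
    rw [le_div_iff₀ (by linarith)]
    nlinarith [mul_pos (sub_pos.2 ht) hLpos]
  · obtain rfl : L = 1 := by linarith
    norm_num at hup ⊢
    exact hup

lemma Real.tanh_nonneg {x : ℝ} (hx : 0 ≤ x) : 0 ≤ Real.tanh x := by
  rw [Real.tanh_eq_sinh_div_cosh]
  exact div_nonneg (Real.sinh_nonneg_iff.2 hx) (Real.cosh_pos x).le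

lemma Real.tanh_half_eq (x : ℝ) : Real.tanh (x / 2) = (Real.exp x - 1) / (Real.exp x + 1) := by
  have h : Real.exp x = Real.exp (x / 2) * Real.exp (x / 2) := by
    rw [← Real.exp_add, add_halves]
  rw [Real.tanh_eq, h, Real.exp_neg]
  field_simp

lemma one_sub_sum_min_exp_div_le_tanh [Nonempty α] {h h' : α → ℝ} {ε : ℝ}
    (hε : ∀ k, |h k - h' k| ≤ ε) :
    1 - ∑ k, min (Real.exp (h k) / ∑ j, Real.exp (h j)) (Real.exp (h' k) / ∑ j, Real.exp (h' j))
      ≤ Real.tanh (ε / 2) := by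
  set Z := ∑ j, Real.exp (h j)
  set Z' := ∑ j, Real.exp (h' j)
  have hZ : 0 < Z := Finset.sum_pos (fun j _ => Real.exp_pos _) univ_nonempty
  have hZ' : 0 < Z' := Finset.sum_pos (fun j _ => Real.exp_pos _) univ_nonempty
  have hε0 : 0 ≤ ε := (abs_nonneg _).trans (hε (Classical.arbitrary α))
  rw [Real.tanh_half_eq]
  refine one_sub_sum_min_le_of_ratio (L := Real.exp (-ε) * Z / Z')
    (by rw [← Finset.sum_div, div_self hZ.ne']) (by rw [← Finset.sum_div, div_self hZ'.ne'])
    (Real.one_le_exp hε0) (fun k => ?_) (fun k => ?_)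
  · have hk := (abs_le.1 (hε k)).2
    calc Real.exp (-ε) * Z / Z' * (Real.exp (h k) / Z) = Real.exp (h k - ε) / Z' := by
          rw [sub_eq_add_neg, Real.exp_add]; field_simp
      _ ≤ Real.exp (h' k) / Z' := by gcongr; linarith
  · have hk := (abs_le.1 (hε k)).1
    calc Real.exp (h' k) / Z' ≤ Real.exp (h k + ε) / Z' := by gcongr; linarith
      _ = Real.exp ε ^ 2 * (Real.exp (-ε) * Z / Z') * (Real.exp (h k) / Z) := by
          rw [Real.exp_add, Real.exp_neg]; field_simp

end TotalVariation

section Hamming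

variable [Fintype V] {q : ℕ}

lemma hamming_self (σ : V → Fin q) : hamming σ σ = 0 := by
  simp [hamming]

lemma hamming_triangle (σ ρ τ : V → Fin q) : hamming σ τ ≤ hamming σ ρ + hamming ρ τ := by
  unfold hamming
  have hsub : (univ.filter fun v => σ v ≠ τ v) ⊆
      (univ.filter fun v => σ v ≠ ρ v) ∪ (univ.filter fun v => ρ v ≠ τ v) := by
    intro v
    simp only [mem_filter, mem_univ, true_and, mem_union]
    intro h
    by_contra! h'
    exact h (h'.1.trans h'.2)
  exact_mod_cast (Finset.card_le_card hsub).trans (Finset.card_union_le _ _)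

lemma hamming_update_update_le (σ : V → Fin q) (u v : V) (c j k : Fin q) :
    hamming (Function.update σ v j) (Function.update (Function.update σ u c) v k) ≤
      (if v = u then 0 else 1) + (if j = k then 0 else 1) := by
  have hsub : (univ.filter fun w =>
        Function.update σ v j w ≠ Function.update (Function.update σ u c) v k w) ⊆
      (({u} : Finset V).erase v) ∪ (if j = k then ∅ else {v}) := by
    intro w
    by_cases hwv : w = v
    · subst hwv
      split_ifs <;> simp_all
    · by_cases hwu : w = u
      · subst hwu
        simp [hwv]
      · simp [Function.update_of_ne hwv, Function.update_of_ne hwu]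
  have h1 : ((({u} : Finset V).erase v).card : ℝ) = if v = u then 0 else 1 := by
    split_ifs with h
    · simp [h]
    · simp [erase_eq_self.2 (by simpa [eq_comm] using h : v ∉ ({u} : Finset V))]
  have h2 : ((if j = k then ∅ else {v} : Finset V).card : ℝ) = if j = k then 0 else 1 := by
    split_ifs <;> simp
  unfold hamming
  rw [← h1, ← h2]
  exact_mod_cast (Finset.card_le_card hsub).trans (Finset.card_union_le _ _)

lemma sum_mul_hamming_update_update_le {γ : Fin q × Fin q → ℝ} (hγ : ∀ jk, 0 ≤ γ jk)
    (hmass : ∑ jk, γ jk = 1) (σ : V → Fin q) (u v : V) (c : Fin q) :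
    ∑ jk, γ jk * hamming (Function.update σ v jk.1) (Function.update (Function.update σ u c) v jk.2)
      ≤ (if v = u then 0 else 1) + ∑ jk, γ jk * (if jk.1 = jk.2 then 0 else 1) :=
  calc _ ≤ ∑ jk, γ jk * ((if v = u then 0 else 1) + if jk.1 = jk.2 then 0 else 1) := by
        gcongr with jk
        · exact hγ jk
        · exact hamming_update_update_le σ u v c jk.1 jk.2
    _ = _ := by simp only [mul_add, Finset.sum_add_distrib, ← Finset.sum_mul, hmass, one_mul]

/-- Path coupling (Bubley–Dyer): glue the couplings along a path of single-site changes from `σ`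
to `τ`. -/
theorem exists_isCoupling_hamming_le_of_update (P : (V → Fin q) → (V → Fin q) → ℝ)
    (hP : ∀ σ τ, 0 ≤ P σ τ) (κ : ℝ)
    (h : ∀ σ u c, ∃ γ, IsCoupling γ (P σ) (P (Function.update σ u c)) ∧
      ∑ p : (V → Fin q) × (V → Fin q), γ p * hamming p.1 p.2 ≤ κ)
    (σ τ : V → Fin q) :
    ∃ γ, IsCoupling γ (P σ) (P τ) ∧
      ∑ p : (V → Fin q) × (V → Fin q), γ p * hamming p.1 p.2 ≤ κ * hamming σ τ := by
  suffices ∀ n σ, (univ.filter fun v => σ v ≠ τ v).card = n → ∃ γ, IsCoupling γ (P σ) (P τ) ∧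
      ∑ p : (V → Fin q) × (V → Fin q), γ p * hamming p.1 p.2 ≤ κ * n from this _ σ rfl
  intro n
  induction n with
  | zero =>
    intro σ hσ
    obtain rfl : σ = τ := funext fun v => by
      by_contra hv
      exact Finset.card_ne_zero_of_mem (mem_filter.2 ⟨mem_univ v, hv⟩) hσ
    obtain ⟨γ, hγ, hcost⟩ := IsCoupling.exists_self_cost_eq_zero (hP σ) hamming hamming_self
    exact ⟨γ, hγ, by simp [hcost]⟩
  | succ n ih =>
    intro σ hσ
    obtain ⟨u, hu⟩ : (univ.filter fun v => σ v ≠ τ v).Nonempty := Finset.card_pos.1 (by omega)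
    set ρ := Function.update σ u (τ u)
    have hρ : (univ.filter fun v => ρ v ≠ τ v) = (univ.filter fun v => σ v ≠ τ v).erase u := by
      ext w
      by_cases hw : w = u
      · subst hw
        simp [ρ]
      · simp [ρ, hw]
    obtain ⟨γ₁, hγ₁, hcost₁⟩ := h σ u (τ u)
    obtain ⟨γ₂, hγ₂, hcost₂⟩ := ih ρ (by rw [hρ, Finset.card_erase_of_mem hu, hσ]; rfl)
    obtain ⟨γ, hγ, hcost⟩ := hγ₁.exists_cost_le_add hγ₂ hamming hamming_triangle
    refine ⟨γ, hγ, hcost.trans ?_⟩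
    push_cast
    linarith

end Hamming

section Glauber

variable [Fintype V] {q : ℕ} {μ : (V → Fin q) → ℝ}

lemma condSpin_nonneg (hμ : ∀ σ, 0 ≤ μ σ) (v : V) (σ : V → Fin q) (k : Fin q) :
    0 ≤ condSpin μ v σ k :=
  div_nonneg (hμ _) (Finset.sum_nonneg fun _ _ => hμ _)

lemma sum_condSpin (hμ : ∀ σ, 0 < μ σ) (v : V) (σ : V → Fin q) : ∑ k, condSpin μ v σ k = 1 := by
  unfold condSpin
  rw [← Finset.sum_div, div_self (Finset.sum_pos (fun _ _ => hμ _) ⟨σ v, mem_univ _⟩).ne']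

lemma glauber_nonneg (hμ : ∀ σ, 0 ≤ μ σ) (σ τ : V → Fin q) : 0 ≤ glauber μ σ τ := by
  unfold glauber
  refine mul_nonneg (by positivity) (Finset.sum_nonneg fun v _ => ?_)
  split_ifs
  exacts [condSpin_nonneg hμ _ _ _, le_rfl]

lemma sum_ite_eq_update {M : Type*} [AddCommMonoid M] (σ τ : V → Fin q) (v : V) (f : Fin q → M) :
    ∑ k, (if τ = Function.update σ v k then f k else 0) =
      if ∀ w, w ≠ v → τ w = σ w then f (τ v) else 0 := by
  simp_rw [Function.eq_update_iff]
  by_cases hτ : ∀ w, w ≠ v → τ w = σ w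
  · rw [if_pos hτ]
    simp only [and_iff_left hτ, Finset.sum_ite_eq, mem_univ, if_true]
  · simp [hτ]

def glauberCoupling (σ τ : V → Fin q) (γ : V → Fin q × Fin q → ℝ) :
    (V → Fin q) × (V → Fin q) → ℝ :=
  fun x => (Fintype.card V : ℝ)⁻¹ *
    ∑ v, ∑ jk : Fin q × Fin q,
      if x = (Function.update σ v jk.1, Function.update τ v jk.2) then γ v jk else 0

lemma isCoupling_glauberCoupling {σ τ : V → Fin q} {γ : V → Fin q × Fin q → ℝ}
    (hγ : ∀ v, IsCoupling (γ v) (condSpin μ v σ) (condSpin μ v τ)) :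
    IsCoupling (glauberCoupling σ τ γ) (glauber μ σ) (glauber μ τ) := by
  refine ⟨fun x => ?_, fun a => ?_, fun b => ?_⟩
  · refine mul_nonneg (by positivity) <|
      Finset.sum_nonneg fun v _ => Finset.sum_nonneg fun jk _ => ?_
    split_ifs
    exacts [(hγ v).1 jk, le_rfl]
  · simp only [glauberCoupling, glauber, ← Finset.mul_sum]
    congr 1
    rw [Finset.sum_comm]
    refine Finset.sum_congr rfl fun v _ => ?_
    rw [Finset.sum_comm, Fintype.sum_prod_type]
    calc _ = ∑ j, if a = Function.update σ v j then condSpin μ v σ j else 0 :=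
          Finset.sum_congr rfl fun j _ => by
            by_cases h : a = Function.update σ v j <;> simp [h, ← (hγ v).2.1 j]
      _ = _ := sum_ite_eq_update σ a v _
  · simp only [glauberCoupling, glauber, ← Finset.mul_sum]
    congr 1
    rw [Finset.sum_comm]
    refine Finset.sum_congr rfl fun v _ => ?_
    rw [Finset.sum_comm, Fintype.sum_prod_type, Finset.sum_comm]
    calc _ = ∑ k, if b = Function.update τ v k then condSpin μ v τ k else 0 :=
          Finset.sum_congr rfl fun k _ => by
            by_cases h : b = Function.update τ v k <;> simp [h, ← (hγ v).2.2 k]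
      _ = _ := sum_ite_eq_update τ b v _

lemma sum_glauberCoupling_mul (σ τ : V → Fin q) (γ : V → Fin q × Fin q → ℝ)
    (d : (V → Fin q) → (V → Fin q) → ℝ) :
    ∑ x, glauberCoupling σ τ γ x * d x.1 x.2 = (Fintype.card V : ℝ)⁻¹ * ∑ v, ∑ jk : Fin q × Fin q,
      γ v jk * d (Function.update σ v jk.1) (Function.update τ v jk.2) := by
  simp only [glauberCoupling, mul_assoc, Finset.sum_mul, ite_mul, zero_mul, ← Finset.mul_sum]
  congr 1
  rw [Finset.sum_comm]
  refine Finset.sum_congr rfl fun v _ => ?_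
  rw [Finset.sum_comm]
  simp

end Glauber

section Potts

variable [Fintype V] {q : ℕ} (G : SimpleGraph V)

def colorCount (σ : V → Fin q) (v : V) (k : Fin q) : ℕ :=
  (univ.filter fun w => G.Adj v w ∧ σ w = k).card

lemma pottsGibbs_pos (β : ℝ) (σ : V → Fin q) : 0 < pottsGibbs q G β σ :=
  div_pos (Real.exp_pos _) (Finset.sum_pos (fun _ _ => Real.exp_pos _) ⟨σ, mem_univ _⟩)

/-- The factor `2` counts both orientations of each monochromatic edge at `v`. -/
lemma exists_neg_mul_pottsH_update (β : ℝ) (σ : V → Fin q) (v : V) :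
    ∃ c, ∀ k, -β * pottsH G (Function.update σ v k) =
      c + 2 * (β / Fintype.card V) * colorCount G σ v k := by
  set E₀ : ℝ := ∑ u, ∑ w, if G.Adj u w ∧ u ≠ v ∧ w ≠ v ∧ σ u = σ w then 1 else 0
  refine ⟨β / Fintype.card V * E₀, fun k => ?_⟩
  have hsplit : ∀ u w, (if G.Adj u w ∧ Function.update σ v k u = Function.update σ v k w
      then (1 : ℝ) else 0) =
      (if G.Adj u w ∧ u ≠ v ∧ w ≠ v ∧ σ u = σ w then 1 else 0) +
      (if u = v ∧ G.Adj v w ∧ σ w = k then 1 else 0) +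
      (if w = v ∧ G.Adj v u ∧ σ u = k then 1 else 0) := by
    intro u w
    by_cases hu : u = v <;> by_cases hw : w = v
    · subst hu hw; simp
    · subst hu; simp [hw, eq_comm]
    · subst hw; simp [hu, G.adj_comm]
    · simp [hu, hw]
  have hcount : (colorCount G σ v k : ℝ) = ∑ w, if G.Adj v w ∧ σ w = k then 1 else 0 := by
    rw [colorCount, Finset.natCast_card_filter]
  have h₁ : ∑ u, ∑ w, (if u = v ∧ G.Adj v w ∧ σ w = k then (1 : ℝ) else 0) =
      colorCount G σ v k := by
    rw [hcount, Finset.sum_eq_single v (fun u _ hu => by simp [hu]) (by simp)]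
    simp
  have h₂ : ∑ u, ∑ w, (if w = v ∧ G.Adj v u ∧ σ u = k then (1 : ℝ) else 0) =
      colorCount G σ v k := by
    rw [hcount]
    refine Finset.sum_congr rfl fun u _ => ?_
    rw [Finset.sum_eq_single v (fun w _ hw => by simp [hw]) (by simp)]
    simp
  simp only [pottsH, hsplit, Finset.sum_add_distrib, h₁, h₂]
  ring

lemma condSpin_pottsGibbs (β : ℝ) (v : V) (σ : V → Fin q) (k : Fin q) :
    condSpin (pottsGibbs q G β) v σ k =
      Real.exp (2 * (β / Fintype.card V) * colorCount G σ v k) /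
        ∑ j, Real.exp (2 * (β / Fintype.card V) * colorCount G σ v j) := by
  obtain ⟨c, hc⟩ := exists_neg_mul_pottsH_update G β σ v
  have hμ : ∀ j, pottsGibbs q G β (Function.update σ v j) =
      Real.exp c / (∑ τ : V → Fin q, Real.exp (-β * pottsH G τ)) *
        Real.exp (2 * (β / Fintype.card V) * colorCount G σ v j) := fun j => by
    rw [pottsGibbs, hc, Real.exp_add, div_mul_eq_mul_div]
  have hC : Real.exp c / (∑ τ : V → Fin q, Real.exp (-β * pottsH G τ)) ≠ 0 :=
    (div_pos (Real.exp_pos c) (Finset.sum_pos (fun _ _ => Real.exp_pos _) ⟨σ, mem_univ _⟩)).ne'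
  rw [condSpin, hμ, Finset.sum_congr rfl fun j _ => hμ j, ← Finset.mul_sum,
    mul_div_mul_left _ _ hC]

lemma abs_colorCount_update_sub_le (σ : V → Fin q) (u v : V) (c k : Fin q) :
    |(colorCount G (Function.update σ u c) v k : ℝ) - colorCount G σ v k| ≤
      if G.Adj v u then 1 else 0 := by
  simp only [colorCount, Finset.natCast_card_filter, ← Finset.sum_sub_distrib]
  rw [Finset.sum_eq_single u (fun w _ hw => by simp [Function.update_of_ne hw]) (by simp)]
  by_cases hvu : G.Adj v u
  · simp only [hvu, true_and, Function.update_self, if_true]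
    split_ifs <;> norm_num
  · simp [hvu]

lemma one_sub_sum_min_condSpin_pottsGibbs_le {β : ℝ} (hβ : 0 ≤ β) (σ : V → Fin q) (u v : V)
    (c : Fin q) :
    1 - ∑ k, min (condSpin (pottsGibbs q G β) v σ k)
        (condSpin (pottsGibbs q G β) v (Function.update σ u c) k) ≤
      if G.Adj v u then Real.tanh (β / Fintype.card V) else 0 := by
  have : Nonempty (Fin q) := ⟨c⟩
  simp only [condSpin_pottsGibbs]
  refine (one_sub_sum_min_exp_div_le_tanh
    (ε := 2 * (β / Fintype.card V) * if G.Adj v u then 1 else 0) fun k => ?_).trans_eq ?_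
  · rw [← mul_sub, abs_mul, abs_of_nonneg (by positivity), abs_sub_comm]
    exact mul_le_mul_of_nonneg_left (abs_colorCount_update_sub_le G σ u v c k) (by positivity)
  · split_ifs <;> simp

lemma sum_ite_ne_add_ite_adj (u : V) (t : ℝ) :
    ∑ v, ((if v = u then 0 else 1) + if G.Adj v u then t else 0) =
      (Fintype.card V - 1) + G.degree u * t := by
  rw [Finset.sum_add_distrib, Finset.sum_ite, Finset.sum_ite]
  simp only [Finset.filter_ne', G.adj_comm, ← SimpleGraph.card_neighborFinset_eq_degree,
    Finset.sum_const, nsmul_eq_mul]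
  rw [Finset.card_erase_of_mem (mem_univ u), Finset.card_univ,
    Nat.cast_sub (Fintype.card_pos_iff.2 ⟨u⟩), ← G.neighborFinset_eq_filter]
  ring

lemma exists_isCoupling_glauber_pottsGibbs_update [Nonempty V] {β : ℝ} (hβ : 0 ≤ β)
    (σ : V → Fin q) (u : V) (c : Fin q) :
    ∃ γ, IsCoupling γ (glauber (pottsGibbs q G β) σ)
        (glauber (pottsGibbs q G β) (Function.update σ u c)) ∧
      ∑ p : (V → Fin q) × (V → Fin q), γ p * hamming p.1 p.2 ≤
        1 - (1 - (G.maxDegree : ℝ) * Real.tanh (β / Fintype.card V)) / Fintype.card V := by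
  set μ := pottsGibbs q G β
  set τ := Function.update σ u c
  set N : ℝ := (Fintype.card V : ℝ)
  set t := Real.tanh (β / N)
  have hμ : ∀ σ, 0 < μ σ := pottsGibbs_pos G β
  choose γ hγ hoff using fun v => exists_isCoupling_offDiag_le
    (condSpin_nonneg (fun σ => (hμ σ).le) v σ) (condSpin_nonneg (fun σ => (hμ σ).le) v τ)
    (sum_condSpin hμ v σ) (sum_condSpin hμ v τ)
  have hmass : ∀ v, ∑ jk, γ v jk = 1 := fun v => by
    rw [Fintype.sum_prod_type]
    simp only [(hγ v).2.1, sum_condSpin hμ]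
  have hsite : ∀ v, ∑ jk, γ v jk * hamming (Function.update σ v jk.1) (Function.update τ v jk.2) ≤
      (if v = u then 0 else 1) + if G.Adj v u then t else 0 := fun v =>
    (sum_mul_hamming_update_update_le (hγ v).1 (hmass v) σ u v c).trans <| add_le_add_right
      ((hoff v).trans (one_sub_sum_min_condSpin_pottsGibbs_le G hβ σ u v c)) _
  have hN : 0 < N := Nat.cast_pos.2 Fintype.card_pos
  have ht : 0 ≤ t := Real.tanh_nonneg (by positivity)
  have hdeg : (G.degree u : ℝ) ≤ G.maxDegree := by exact_mod_cast G.degree_le_maxDegree u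
  refine ⟨glauberCoupling σ τ γ, isCoupling_glauberCoupling hγ, ?_⟩
  calc _ = N⁻¹ * ∑ v, ∑ jk,
        γ v jk * hamming (Function.update σ v jk.1) (Function.update τ v jk.2) :=
        sum_glauberCoupling_mul σ τ γ hamming
    _ ≤ N⁻¹ * ((N - 1) + G.degree u * t) := by
        rw [← sum_ite_ne_add_ite_adj]
        gcongr with v
        exact hsite v
    _ ≤ N⁻¹ * ((N - 1) + G.maxDegree * t) := by gcongr
    _ = _ := by field_simp; ring

end Potts

theorem stmt6_general [Fintype V] [Nonempty V] (G : SimpleGraph V) (q : ℕ)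
    (β : ℝ) (hβ : 0 ≤ β)
    (σ τ : V → Fin q) :
    ∃ γ : (V → Fin q) × (V → Fin q) → ℝ,
      IsCoupling γ (glauber (pottsGibbs q G β) σ) (glauber (pottsGibbs q G β) τ) ∧
      ∑ p : (V → Fin q) × (V → Fin q), γ p * hamming p.1 p.2 ≤
        (1 - (1 - (G.maxDegree : ℝ) * Real.tanh (β / Fintype.card V)) /
            Fintype.card V) * hamming σ τ :=
  exists_isCoupling_hamming_le_of_update _ (glauber_nonneg fun σ => (pottsGibbs_pos G β σ).le) _
    (exists_isCoupling_glauber_pottsGibbs_update G hβ) σ τ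

theorem stmt6 [Fintype V] [Nonempty V] (G : SimpleGraph V) (q : ℕ) (hq : 3 ≤ q)
    (β : ℝ) (hβ : 0 ≤ β)
    (hc : (G.maxDegree : ℝ) * Real.tanh (β / Fintype.card V) < 1)
    (σ τ : V → Fin q) :
    ∃ γ : (V → Fin q) × (V → Fin q) → ℝ,
      IsCoupling γ (glauber (pottsGibbs q G β) σ) (glauber (pottsGibbs q G β) τ) ∧
      ∑ p : (V → Fin q) × (V → Fin q), γ p * hamming p.1 p.2 ≤
        (1 - (1 - (G.maxDegree : ℝ) * Real.tanh (β / Fintype.card V)) /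
            Fintype.card V) * hamming σ τ :=
  stmt6_general G q β hβ σ τ
end
end
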